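/- The proximal operator of a single group centering penalty preserves the within-group sum: if β* minimizes (1/2)||β - η||_2^2 + λ w ||D_a β_A||_2, then 1^T β*_A = 1^T η_A and β*_j = η_j for all j ∉ A; consequently 1_p^T β* = 1_p^T η. -/

import Mathlib

open Matrix BigOperators

noncomputable def l2 {n : Type*} [Fintype n] (v : n → ℝ) : ℝ := Real.sqrt (∑ i, v i ^ 2)

noncomputable def Dmat (n : Type*) [Fintype n] [DecidableEq n] : Matrix n n ℝ :=
  1 - ((Fintype.card n : ℝ))⁻¹ • Matrix.of (fun _ _ => (1 : ℝ))

/-- Single-group prox objective: (1/2)‖β-η‖² + λw‖D_a β_A‖₂. -/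
noncomputable def proxObj {p : ℕ} (lam wgt : ℝ) (A : Finset (Fin p))
    (η β : Fin p → ℝ) : ℝ :=
  (1 / 2) * l2 (β - η) ^ 2 + lam * wgt * l2 ((Dmat {x // x ∈ A}).mulVec (fun i => β i.1))

/-!
The penalty `‖D_a β_A‖₂` does not change when `β` is moved along `1_A` (the centering matrix
kills constants) or along a coordinate direction outside `A`. Along such a direction `v` the
minimizer must therefore minimize `‖β - η‖²` alone, which forces `β* - η ⟂ v`. For `v = 1_A`
this is the equality of the group sums, for `v = e_j` with `j ∉ A` it is `β*_j = η_j`.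
-/

lemma l2_sq {n : Type*} [Fintype n] (v : n → ℝ) : l2 v ^ 2 = ∑ i, v i ^ 2 :=
  Real.sq_sqrt (Finset.sum_nonneg fun _ _ => sq_nonneg _)

lemma Dmat_mulVec_const {n : Type*} [Fintype n] [DecidableEq n] (c : ℝ) :
    Dmat n *ᵥ (fun _ => c) = 0 := by
  ext i
  have : Nonempty n := ⟨i⟩
  have hcard : (Fintype.card n : ℝ) ≠ 0 := Nat.cast_ne_zero.mpr Fintype.card_ne_zero
  rw [Dmat, sub_mulVec, one_mulVec, smul_mulVec]
  simp [mulVec, dotProduct, hcard]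

lemma eq_zero_of_forall_mul_le_sq_mul {a b : ℝ} (h : ∀ t : ℝ, 2 * t * a ≤ t ^ 2 * b) :
    a = 0 := by
  have hdiscrim : discrim b (-2 * a) 0 ≤ 0 :=
    discrim_le_zero fun t => by nlinarith [h t]
  rw [discrim] at hdiscrim
  nlinarith [sq_nonneg a]

lemma sum_sub_mul_eq_zero_of_forall_le {ι : Type*} [Fintype ι] (P : (ι → ℝ) → ℝ)
    (η βs v : ι → ℝ)
    (hmin : ∀ β, (1 / 2) * l2 (βs - η) ^ 2 + P βs ≤ (1 / 2) * l2 (β - η) ^ 2 + P β)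
    (hP : ∀ t : ℝ, P (βs - t • v) = P βs) :
    ∑ i, (βs i - η i) * v i = 0 := by
  refine eq_zero_of_forall_mul_le_sq_mul (b := ∑ i, v i ^ 2) fun t => ?_
  have hle := hmin (βs - t • v)
  rw [hP, l2_sq, l2_sq] at hle
  have hexpand : ∑ i, (βs - t • v - η) i ^ 2
      = ∑ i, (βs - η) i ^ 2 - 2 * t * ∑ i, (βs i - η i) * v i + t ^ 2 * ∑ i, v i ^ 2 := by
    simp only [Pi.sub_apply, Pi.smul_apply, smul_eq_mul, Finset.mul_sum, ← Finset.sum_sub_distrib,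
      ← Finset.sum_add_distrib]
    exact Finset.sum_congr rfl fun i _ => by ring
  linarith

theorem stmt7_general {p : ℕ} (lam wgt : ℝ)
    (A : Finset (Fin p)) (η : Fin p → ℝ) (βs : Fin p → ℝ)
    (hmin : ∀ β : Fin p → ℝ, proxObj lam wgt A η βs ≤ proxObj lam wgt A η β) :
    (∑ i ∈ A, βs i = ∑ i ∈ A, η i) ∧
    (∀ j, j ∉ A → βs j = η j) ∧
    (∑ j, βs j = ∑ j, η j) := by
  set P : (Fin p → ℝ) → ℝ := fun β => lam * wgt * l2 (Dmat A *ᵥ fun i => β i.1)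
  have horth := fun v => sum_sub_mul_eq_zero_of_forall_le P η βs v hmin
  have hgroup : ∑ i ∈ A, βs i = ∑ i ∈ A, η i := by
    have h := horth (fun i => if i ∈ A then 1 else 0) fun t => by
      have hshift : (fun i : A => (βs - t • fun i => if i ∈ A then (1 : ℝ) else 0) i.1)
          = (fun i : A => βs i.1) - fun _ => t := by
        funext i; simp [i.2]
      simp only [P, hshift, mulVec_sub, Dmat_mulVec_const, sub_zero]
    simp only [mul_ite, mul_one, mul_zero, Finset.sum_ite_mem, Finset.univ_inter,
      Finset.sum_sub_distrib] at h
    linarith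
  have houtside : ∀ j, j ∉ A → βs j = η j := by
    intro j hj
    have h := horth (Pi.single j 1) fun t => by
      have hfix : (fun i : A => (βs - t • (Pi.single j 1 : Fin p → ℝ)) i.1)
          = fun i : A => βs i.1 := by
        funext i
        simp [show (i : Fin p) ≠ j from fun h => hj (h ▸ i.2)]
      simp only [P, hfix]
    simp only [mul_ite, Pi.single_apply, mul_one, mul_zero, Finset.sum_ite_eq',
      Finset.mem_univ, if_true] at h
    linarith
  refine ⟨hgroup, houtside, ?_⟩
  rw [← Finset.sum_add_sum_compl A βs, ← Finset.sum_add_sum_compl A η, hgroup]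
  exact congrArg _ (Finset.sum_congr rfl fun j hj => houtside j (Finset.mem_compl.mp hj))

/-- The proximal operator preserves the within-group sum and fixes coordinates outside A. -/
theorem stmt7 {p : ℕ} (lam wgt : ℝ) (hlam : 0 < lam) (hwgt : 0 ≤ wgt)
    (A : Finset (Fin p)) (η : Fin p → ℝ) (βs : Fin p → ℝ)
    (hmin : ∀ β : Fin p → ℝ, proxObj lam wgt A η βs ≤ proxObj lam wgt A η β) :
    (∑ i ∈ A, βs i = ∑ i ∈ A, η i) ∧
    (∀ j, j ∉ A → βs j = η j) ∧
    (∑ j, βs j = ∑ j, η j) :=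
  stmt7_general lam wgt A η βs hmin
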